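/- Let D be a symmetric positive definite K×K matrix and E: F_ad → ℝ a C¹ function. Given Ξⁿ and Ξ^{n+1} in F_ad with distinct coordinates κ_i^{n} ≠ κ_i^{n+1} for all i, define the intermediate points Ξⁿ_{(i)} = Ξⁿ + Σ_{l=1}^{i}(κ_l^{n+1}−κ_l^{n})e_l. If for each i = 1,…,K one has (1/τ)Σ_j D_{ij}(κ_j^{n+1}−κ_j^{n}) = −(E(Ξⁿ_{(i)}) − E(Ξⁿ_{(i−1)}))/(κ_i^{n+1}−κ_i^{n}), then the discrete energy identity (E(Ξ^{n+1}) − E(Ξⁿ))/τ = −(1/τ²) D(Ξ^{n+1}−Ξⁿ)·(Ξ^{n+1}−Ξⁿ) holds exactly. -/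
import Mathlib


open scoped BigOperators
open Matrix

/-- exact discrete energy identity for the coordinate-wise
difference-quotient scheme, obtained by telescoping along the intermediate
points `Ξⁿ_{(i)}`. -/
theorem exact_discrete_energy_identity
    (K : ℕ) (hK : 0 < K)
    (D : Matrix (Fin K) (Fin K) ℝ) (hDsymm : D.IsSymm) (hDpd : D.PosDef)
    (τ : ℝ) (hτ : 0 < τ)
    (E : (Fin K → ℝ) → ℝ)
    (κ0 κ1 : Fin K → ℝ)
    (hdistinct : ∀ i : Fin K, κ1 i ≠ κ0 i)
    -- intermediate points Ξⁿ_{(i)} = Ξⁿ + Σ_{l ≤ i} (κ_l^{n+1} − κ_l^n) e_l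
    (ΞI : ℕ → (Fin K → ℝ))
    (hΞI : ∀ (i : ℕ) (l : Fin K), ΞI i l = if (l : ℕ) < i then κ1 l else κ0 l)
    (hscheme : ∀ i : Fin K,
      (1 / τ) * ∑ j : Fin K, D i j * (κ1 j - κ0 j)
        = - (E (ΞI ((i : ℕ) + 1)) - E (ΞI (i : ℕ))) / (κ1 i - κ0 i)) :
    (E κ1 - E κ0) / τ
      = - (1 / τ ^ 2) * (D.mulVec (κ1 - κ0) ⬝ᵥ (κ1 - κ0)) := by
  have h0 : ΞI 0 = κ0 := by
    funext l; rw [hΞI]; simp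
  have hKK : ΞI K = κ1 := by
    funext l; rw [hΞI]; simp [l.isLt]
  -- step identity
  have hstep : ∀ i : Fin K,
      E (ΞI ((i : ℕ) + 1)) - E (ΞI (i : ℕ))
        = - (1 / τ) * (∑ j : Fin K, D i j * (κ1 j - κ0 j)) * (κ1 i - κ0 i) := by
    intro i
    have hne : κ1 i - κ0 i ≠ 0 := sub_ne_zero.mpr (hdistinct i)
    have := hscheme i
    field_simp at this ⊢
    linarith [this]
  have htel : E κ1 - E κ0
      = ∑ i ∈ Finset.range K, (E (ΞI (i + 1)) - E (ΞI i)) := by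
    rw [Finset.sum_range_sub (fun n => E (ΞI n)), h0, hKK]
  have hsum : ∑ i ∈ Finset.range K, (E (ΞI (i + 1)) - E (ΞI i))
      = ∑ i : Fin K, (E (ΞI ((i : ℕ) + 1)) - E (ΞI (i : ℕ))) :=
    (Finset.sum_range fun n => E (ΞI (n + 1)) - E (ΞI n)).symm ▸ rfl
  have hdot : D.mulVec (κ1 - κ0) ⬝ᵥ (κ1 - κ0)
      = ∑ i : Fin K, (∑ j : Fin K, D i j * (κ1 j - κ0 j)) * (κ1 i - κ0 i) := by
    simp [dotProduct, mulVec, Pi.sub_apply]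
  have hE : E κ1 - E κ0
      = - (1 / τ) * (D.mulVec (κ1 - κ0) ⬝ᵥ (κ1 - κ0)) := by
    rw [htel, hsum, hdot]
    rw [Finset.mul_sum]
    exact Finset.sum_congr rfl fun i _ => by rw [hstep i]; ring
  rw [hE]
  have hτ0 : τ ≠ 0 := ne_of_gt hτ
  generalize (D.mulVec (κ1 - κ0) ⬝ᵥ (κ1 - κ0)) = S
  field_simp
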